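/- For all n ≥ 1, the number of permutations π of [n] such that π avoids both patterns 312 and 132, and π² avoids 312, equals k²+1 if n = 2k and k²+k+1 if n = 2k+1. -/
import Mathlib
open Equiv Finset


def Avoids312 {n : ℕ} (π : Equiv.Perm (Fin n)) : Prop :=
  ¬ ∃ i j l : Fin n, i < j ∧ j < l ∧ π j < π l ∧ π l < π i

def Avoids132 {n : ℕ} (π : Equiv.Perm (Fin n)) : Prop :=
  ¬ ∃ i j l : Fin n, i < j ∧ j < l ∧ π i < π l ∧ π l < π j

def revfun (n t : ℕ) (i : Fin n) : Fin n :=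
  if h : (i : ℕ) < t ∧ t ≤ n then ⟨t - 1 - (i : ℕ), by omega⟩ else i

lemma revfun_invol (n t : ℕ) (i : Fin n) : revfun n t (revfun n t i) = i := by
  apply Fin.ext
  unfold revfun
  split_ifs with h1 h2 <;> simp only [Fin.val_mk] at * <;> omega

def rev (n t : ℕ) : Equiv.Perm (Fin n) :=
  ⟨revfun n t, revfun n t, revfun_invol n t, revfun_invol n t⟩

lemma rev_val {n t : ℕ} (ht : t ≤ n) (i : Fin n) :
    ((rev n t i : Fin n) : ℕ) = if (i : ℕ) < t then t - 1 - (i : ℕ) else (i : ℕ) := by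
  show ((revfun n t i : Fin n) : ℕ) = _
  rcases Nat.lt_or_ge (i : ℕ) t with h | h
  · rw [if_pos h]; unfold revfun; rw [dif_pos ⟨h, ht⟩]
  · rw [if_neg (not_lt.2 h)]; unfold revfun
    rw [dif_neg (fun hc => absurd hc.1 (not_lt.2 h))]

def Pms (n m s : ℕ) : Equiv.Perm (Fin n) := rev n (m + s) * rev n s

def fval (m s x : ℕ) : ℕ :=
  if x < s then m + x else if x < m + s then m + s - 1 - x else x

lemma Pms_val {n : ℕ} (m s : ℕ) (hn : m + s ≤ n) (i : Fin n) :
    ((Pms n m s i : Fin n) : ℕ) = fval m s (i : ℕ) := by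
  have hi := i.isLt
  show ((rev n (m + s) (rev n s i) : Fin n) : ℕ) = fval m s (i : ℕ)
  rw [rev_val hn, rev_val (by omega : s ≤ n)]
  unfold fval
  split_ifs <;> omega

lemma Pms_sq_val {n : ℕ} (m s : ℕ) (hn : m + s ≤ n) (i : Fin n) :
    ((Pms n m s (Pms n m s i) : Fin n) : ℕ) = fval m s (fval m s (i : ℕ)) := by
  rw [Pms_val m s hn, Pms_val m s hn]

lemma one_good (n : ℕ) :
    Avoids312 (1 : Equiv.Perm (Fin n)) ∧ Avoids132 (1 : Equiv.Perm (Fin n)) ∧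
      Avoids312 ((1 : Equiv.Perm (Fin n)) * 1) := by
  refine ⟨?_, ?_, ?_⟩ <;>
  · rintro ⟨i, j, l, h1, h2, h3, h4⟩
    simp only [Equiv.Perm.coe_one, id_eq, Equiv.Perm.coe_mul, Function.comp_apply] at h3 h4
    rw [Fin.lt_def] at h1 h2 h3 h4
    omega

lemma fvalfval (m s x : ℕ) (hsm : s ≤ m) :
    fval m s (fval m s x) =
      if x < s then s - 1 - x else if x < m then x
        else if x < m + s then 2 * m + s - 1 - x else x := by
  unfold fval
  split_ifs <;> omega

lemma Pms_good {n : ℕ} (m s : ℕ) (hs : 1 ≤ s) (hsm : s ≤ m) (hn : m + s ≤ n) :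
    Avoids312 (Pms n m s) ∧ Avoids132 (Pms n m s) ∧
      Avoids312 (Pms n m s * Pms n m s) := by
  refine ⟨?_, ?_, ?_⟩
  · rintro ⟨i, j, l, h1, h2, h3, h4⟩
    rw [Fin.lt_def] at h1 h2 h3 h4
    rw [Pms_val m s hn] at h3 h4
    rw [Pms_val m s hn] at h3
    rw [Pms_val m s hn] at h4
    unfold fval at h3 h4
    split_ifs at h3 h4 <;> omega
  · rintro ⟨i, j, l, h1, h2, h3, h4⟩
    rw [Fin.lt_def] at h1 h2 h3 h4
    rw [Pms_val m s hn] at h3 h4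
    rw [Pms_val m s hn] at h3
    rw [Pms_val m s hn] at h4
    unfold fval at h3 h4
    split_ifs at h3 h4 <;> omega
  · rintro ⟨i, j, l, h1, h2, h3, h4⟩
    rw [Fin.lt_def] at h1 h2 h3 h4
    simp only [Equiv.Perm.coe_mul, Function.comp_apply] at h3 h4
    rw [Pms_sq_val m s hn] at h3 h4
    rw [Pms_sq_val m s hn] at h3
    rw [Pms_sq_val m s hn] at h4
    rw [fvalfval m s _ hsm, fvalfval m s _ hsm] at h3
    rw [fvalfval m s _ hsm, fvalfval m s _ hsm] at h4
    split_ifs at h3 h4 <;> omega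

def Tset (n : ℕ) : Finset (ℕ × ℕ) :=
  (range n).biUnion fun q => (range ((q + 1) / 2)).image fun h => (q, h)

lemma mem_Tset {n : ℕ} {p : ℕ × ℕ} : p ∈ Tset n ↔ p.1 < n ∧ 2 * p.2 + 1 ≤ p.1 := by
  unfold Tset
  simp only [mem_biUnion, mem_range, mem_image]
  constructor
  · rintro ⟨q, hq, h, hh, rfl⟩; exact ⟨hq, by omega⟩
  · rintro ⟨h1, h2⟩; exact ⟨p.1, h1, p.2, by omega, rfl⟩

lemma Tset_card (n : ℕ) : (Tset n).card = ∑ q ∈ range n, (q + 1) / 2 := by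
  unfold Tset
  rw [card_biUnion]
  · apply Finset.sum_congr rfl
    intro q _
    rw [card_image_of_injective _ (fun a b hab => by simpa using congrArg Prod.snd hab),
      card_range]
  · intro q1 h1 q2 h2 hne
    simp only [disjoint_left, mem_image, mem_range]
    rintro a ⟨h, _, rfl⟩ ⟨h', _, hEq⟩
    exact hne (congrArg Prod.fst hEq).symm

lemma sum_halves (k : ℕ) :
    (∑ q ∈ range (2 * k), (q + 1) / 2) = k * k ∧
      (∑ q ∈ range (2 * k + 1), (q + 1) / 2) = k * k + k := by
  induction k with
  | zero => simp
  | succ k ih =>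
    obtain ⟨e1, e2⟩ := ih
    have h2 : 2 * (k + 1) = (2 * k + 1) + 1 := by ring
    have hr : (k + 1) * (k + 1) = k * k + 2 * k + 1 := by ring
    constructor
    · rw [h2, sum_range_succ, e2]; omega
    · rw [h2, sum_range_succ, sum_range_succ, e2]; omega

def Gset (n : ℕ) : Finset (Equiv.Perm (Fin n)) :=
  insert 1 ((Tset n).image fun p => Pms n (p.1 - p.2) (p.2 + 1))

lemma Gset_card (n : ℕ) (hn : 1 ≤ n) : (Gset n).card = 1 + ∑ q ∈ range n, (q + 1) / 2 := by
  unfold Gset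
  rw [card_insert_of_notMem, card_image_of_injOn, Tset_card]
  · omega
  · -- injOn
    intro p1 hp1' p2 hp2' hEq0
    have hp1 := Finset.mem_coe.1 hp1'
    have hp2 := Finset.mem_coe.1 hp2'
    have h1 := mem_Tset.1 hp1
    have h2 := mem_Tset.1 hp2
    have hEq : Pms n (p1.1 - p1.2) (p1.2 + 1) = Pms n (p2.1 - p2.2) (p2.2 + 1) := hEq0
    have key : ∀ x : Fin n, fval (p1.1 - p1.2) (p1.2 + 1) (x : ℕ)
        = fval (p2.1 - p2.2) (p2.2 + 1) (x : ℕ) := by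
      intro x
      rw [← Pms_val _ _ (by omega), ← Pms_val _ _ (by omega), hEq]
    have e0 : p1.1 - p1.2 = p2.1 - p2.2 := by
      have k0 := key ⟨0, hn⟩
      unfold fval at k0
      simp only [Fin.val_mk] at k0
      split_ifs at k0 <;> omega
    have e1 : p1.2 = p2.2 := by
      by_contra hne
      rcases Nat.lt_or_ge p1.2 p2.2 with hlt | hge
      · have k1 := key ⟨p1.2 + 1, by omega⟩
        unfold fval at k1
        simp only [Fin.val_mk] at k1
        split_ifs at k1 <;> omega
      · have k1 := key ⟨p2.2 + 1, by omega⟩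
        unfold fval at k1
        simp only [Fin.val_mk] at k1
        split_ifs at k1 <;> omega
    exact Prod.ext (by omega) e1
  · -- 1 not in image
    rw [mem_image]
    rintro ⟨p, hp, hEq⟩
    have h1 := mem_Tset.1 hp
    have k0 := congrArg (fun σ : Equiv.Perm (Fin n) => ((σ ⟨0, hn⟩ : Fin n) : ℕ)) hEq
    simp only [Equiv.Perm.coe_one, id_eq] at k0
    rw [Pms_val _ _ (by omega)] at k0
    unfold fval at k0
    simp only [Fin.val_mk] at k0
    split_ifs at k0 <;> omega

lemma converse {n : ℕ} (π : Equiv.Perm (Fin n))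
    (h312 : Avoids312 π) (h132 : Avoids132 π) (hsq : Avoids312 (π * π)) :
    π = 1 ∨ ∃ m s, 1 ≤ s ∧ s ≤ m ∧ m + s ≤ n ∧ π = Pms n m s := by
  classical
  set f : ℕ → ℕ := fun x => if h : x < n then ((π ⟨x, h⟩ : Fin n) : ℕ) else x with hfdef
  set g : ℕ → ℕ := fun x => if h : x < n then ((π.symm ⟨x, h⟩ : Fin n) : ℕ) else x with hgdef
  have hfv : ∀ (x : ℕ) (h : x < n), f x = ((π ⟨x, h⟩ : Fin n) : ℕ) := fun x h => dif_pos h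
  have hgv : ∀ (x : ℕ) (h : x < n), g x = ((π.symm ⟨x, h⟩ : Fin n) : ℕ) := fun x h => dif_pos h
  have hfid : ∀ x, n ≤ x → f x = x := fun x h => dif_neg (by omega)
  have hf : ∀ x, x < n → f x < n := by
    intro x h; rw [hfv x h]; exact (π ⟨x, h⟩).isLt
  have hg : ∀ x, x < n → g x < n := by
    intro x h; rw [hgv x h]; exact (π.symm ⟨x, h⟩).isLt
  have hgf : ∀ (x : ℕ) (h : x < n), g (f x) = x := by
    intro x h
    rw [hfv x h, hgv _ (π ⟨x, h⟩).isLt, Fin.eta, Equiv.symm_apply_apply]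
  have hfg : ∀ (x : ℕ) (h : x < n), f (g x) = x := by
    intro x h
    rw [hgv x h, hfv _ (π.symm ⟨x, h⟩).isLt, Fin.eta, Equiv.apply_symm_apply]
  have hfinj : ∀ x y, x < n → y < n → f x = f y → x = y := by
    intro x y hx hy h
    have := congrArg g h
    rwa [hgf x hx, hgf y hy] at this
  have hff : ∀ (x : ℕ) (h : x < n), (((π * π) ⟨x, h⟩ : Fin n) : ℕ) = f (f x) := by
    intro x h
    rw [Equiv.Perm.mul_apply]
    have e1 : (⟨f x, hf x h⟩ : Fin n) = π ⟨x, h⟩ :=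
      Fin.ext (by simp only [Fin.val_mk]; exact hfv x h)
    rw [hfv (f x) (hf x h), e1]
  have HB : ∀ i j l, i < l → j < l → l < n → f i < f l → f l < f j → False := by
    intro i j l hil hjl hln h1 h2
    rcases lt_trichotomy i j with hij | rfl | hji
    · refine h132 ⟨⟨i, by omega⟩, ⟨j, by omega⟩, ⟨l, hln⟩, ?_, ?_, ?_, ?_⟩
      · rw [Fin.lt_def]; exact hij
      · rw [Fin.lt_def]; exact hjl
      · rw [Fin.lt_def]; rw [← hfv i (by omega), ← hfv l hln]; exact h1
      · rw [Fin.lt_def]; rw [← hfv l hln, ← hfv j (by omega)]; exact h2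
    · omega
    · refine h312 ⟨⟨j, by omega⟩, ⟨i, by omega⟩, ⟨l, hln⟩, ?_, ?_, ?_, ?_⟩
      · rw [Fin.lt_def]; exact hji
      · rw [Fin.lt_def]; exact hil
      · rw [Fin.lt_def]; rw [← hfv i (by omega), ← hfv l hln]; exact h1
      · rw [Fin.lt_def]; rw [← hfv l hln, ← hfv j (by omega)]; exact h2
  have HA : ∀ i j w l, i ≤ l → j ≤ l → w < n → f i < f w → f w < f j → w ≤ l := by
    intro i j w l hi hj hwn h1 h2
    by_contra hw
    push_neg at hw
    exact HB i j w (by omega) (by omega) hwn h1 h2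
  have Hsq : ∀ i j l, i < j → j < l → l < n →
      f (f j) < f (f l) → f (f l) < f (f i) → False := by
    intro i j l h1 h2 h3 h4 h5
    refine hsq ⟨⟨i, by omega⟩, ⟨j, by omega⟩, ⟨l, h3⟩, ?_, ?_, ?_, ?_⟩
    · rw [Fin.lt_def]; exact h1
    · rw [Fin.lt_def]; exact h2
    · rw [Fin.lt_def, hff j (by omega), hff l h3]; exact h4
    · rw [Fin.lt_def, hff l h3, hff i (by omega)]; exact h5
  have HD : ∀ l, l < n → ∃ w, w ≤ l ∧ l ≤ f w := by
    intro l hl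
    by_contra hcon
    push_neg at hcon
    have himg : ((range (l + 1)).image f) ⊆ range l := by
      intro v hv
      rw [mem_image] at hv
      obtain ⟨w, hw, rfl⟩ := hv
      rw [mem_range] at hw ⊢
      exact hcon w (by omega)
    have hcard : ((range (l + 1)).image f).card = l + 1 := by
      rw [Finset.card_image_of_injOn, card_range]
      intro x hx y hy hxy
      rw [mem_coe, mem_range] at hx hy
      exact hfinj x y (by omega) (by omega) hxy
    have := Finset.card_le_card himg
    rw [hcard, card_range] at this
    omega
  -- main case split on f 0
  rcases Nat.eq_zero_or_pos (f 0) with hm | hm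
  · -- identity case
    left
    have hdn : ∀ x, x < n → f x = x := by
      intro x
      induction x using Nat.strong_induction_on with
      | _ x ih =>
        intro hx
        rcases Nat.eq_zero_or_pos x with rfl | hx1
        · exact hm
        · have hge : x ≤ f x := by
            by_contra hlt
            push_neg at hlt
            have h1 := ih (f x) hlt (hf x hx)
            have := hfinj (f x) x (hf x hx) hx (by omega)
            omega
          rcases eq_or_lt_of_le hge with heq | hlt
          · omega
          · exfalso
            have hwx : f (g x) = x := hfg x hx
            have hwn : g x < n := hg x hx
            rcases Nat.lt_or_ge (g x) x with hw | hw
            · have := ih (g x) hw hwn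
              omega
            · have hle : g x ≤ x :=
                HA (x - 1) x (g x) x (by omega) le_rfl hwn
                  (by rw [ih (x - 1) (by omega) (by omega)]; omega) (by omega)
              have : g x = x := by omega
              rw [this] at hwx
              omega
    apply Equiv.ext
    intro i
    apply Fin.ext
    have h1 : ((π i : Fin n) : ℕ) = f (i : ℕ) := by rw [hfv _ i.isLt, Fin.eta]
    have h2 := hdn (i : ℕ) i.isLt
    simp only [Equiv.Perm.coe_one, id_eq]
    omega
  · -- main case : f 0 = m ≥ 1
    right
    have hn0 : 0 < n := by
      by_contra hcon
      push_neg at hcon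
      have := hfid 0 (by omega)
      omega
    have hmn : f 0 < n := hf 0 hn0
    obtain ⟨m, hm0⟩ : ∃ m, f 0 = m := ⟨f 0, rfl⟩
    obtain ⟨c, hc0⟩ : ∃ c, g (m - 1) = c := ⟨g (m - 1), rfl⟩
    have hfc : f c = m - 1 := by rw [← hc0]; exact hfg (m - 1) (by omega)
    have hc_lt : c < n := by rw [← hc0]; exact hg _ (by omega)
    have hc1 : 1 ≤ c := by
      rcases Nat.eq_zero_or_pos c with rfl | h
      · omega
      · exact h
    have hAsc : ∀ y, y < c → f y = m + y := by
      intro y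
      induction y using Nat.strong_induction_on with
      | _ y ih =>
        intro hyc
        have hyn : y < n := by omega
        rcases Nat.eq_zero_or_pos y with rfl | hy1
        · omega
        · have hfy : f y < n := hf y hyn
          have e1 : ¬ f y < m - 1 := by
            intro hlt
            have : c ≤ y := HA y 0 c y le_rfl (by omega) hc_lt (by omega) (by omega)
            omega
          have e2 : f y ≠ m - 1 := by
            intro hEq
            have : c = y := hfinj c y hc_lt hyn (by omega)
            omega
          have e3 : ¬ (m ≤ f y ∧ f y < m + y) := by
            rintro ⟨ha, hb⟩
            have h1 := ih (f y - m) (by omega) (by omega)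
            have := hfinj (f y - m) y (by omega) hyn (by omega)
            omega
          have e4 : ¬ (m + y < f y) := by
            intro hlt
            have hmyn : m + y < n := by omega
            have hw : f (g (m + y)) = m + y := hfg _ hmyn
            have hwle : g (m + y) ≤ y :=
              HA (y - 1) y (g (m + y)) y (by omega) le_rfl (hg _ hmyn)
                (by rw [ih (y - 1) (by omega) (by omega)]; omega) (by omega)
            rcases eq_or_lt_of_le hwle with heq | hlt2
            · rw [heq] at hw; omega
            · rw [ih (g (m + y)) hlt2 (by omega)] at hw; omega
          omega
    have hDesc : ∀ e, e < m → f (c + e) = m - 1 - e := by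
      intro e
      induction e using Nat.strong_induction_on with
      | _ e ih =>
        intro hem
        rcases Nat.eq_zero_or_pos e with rfl | he1
        · rw [Nat.add_zero]; omega
        · have hr_n : g 0 < n := hg 0 (by omega)
          have hr_f : f (g 0) = 0 := hfg 0 (by omega)
          have hr_pos : 1 ≤ g 0 := by
            rcases Nat.eq_zero_or_pos (g 0) with h0 | h
            · rw [h0] at hr_f; omega
            · exact h
          have hr_ge : c + e ≤ g 0 := by
            by_contra hcon
            push_neg at hcon
            rcases Nat.lt_or_ge (g 0) c with h1 | h1
            · have := hAsc (g 0) h1; omega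
            · have h2 := ih (g 0 - c) (by omega) (by omega)
              rw [(by omega : c + (g 0 - c) = g 0)] at h2
              omega
          have hcen : c + e < n := by omega
          have hvn : f (c + e) < n := hf _ hcen
          have x1 : ¬ (m ≤ f (c + e) ∧ f (c + e) ≤ m + c - 1) := by
            rintro ⟨ha, hb⟩
            have h1 := hAsc (f (c + e) - m) (by omega)
            have := hfinj (f (c + e) - m) (c + e) (by omega) hcen (by omega)
            omega
          have x2 : ¬ (m - e ≤ f (c + e) ∧ f (c + e) ≤ m - 1) := by
            rintro ⟨ha, hb⟩
            have heq := ih (m - 1 - f (c + e)) (by omega) (by omega)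
            have := hfinj (c + (m - 1 - f (c + e))) (c + e) (by omega) hcen (by omega)
            omega
          have x3 : ¬ (f (c + e) < m - 1 - e) := by
            intro hlt
            have hwn : m - 1 - e < n := by omega
            have hw : f (g (m - 1 - e)) = m - 1 - e := hfg _ hwn
            have hwle : g (m - 1 - e) ≤ c + e :=
              HA (c + e) 0 (g (m - 1 - e)) (c + e) le_rfl (by omega) (hg _ hwn)
                (by omega) (by omega)
            rcases Nat.lt_or_ge (g (m - 1 - e)) c with h1 | h1
            · have := hAsc _ h1; omega
            · rcases eq_or_lt_of_le hwle with heq | h2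
              · rw [heq] at hw; omega
              · have h3 := ih (g (m - 1 - e) - c) (by omega) (by omega)
                rw [(by omega : c + (g (m - 1 - e) - c) = g (m - 1 - e))] at h3
                omega
          have x4 : ¬ (m + c < f (c + e)) := by
            intro hlt
            have hwn : m + c < n := by omega
            have hw : f (g (m + c)) = m + c := hfg _ hwn
            have hwle : g (m + c) ≤ c + e :=
              HA (c - 1) (c + e) (g (m + c)) (c + e) (by omega) le_rfl (hg _ hwn)
                (by rw [hAsc (c - 1) (by omega)]; omega) (by omega)
            rcases Nat.lt_or_ge (g (m + c)) c with h1 | h1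
            · have := hAsc _ h1; omega
            · rcases eq_or_lt_of_le hwle with heq | h2
              · rw [heq] at hw; omega
              · have h3 := ih (g (m + c) - c) (by omega) (by omega)
                rw [(by omega : c + (g (m + c) - c) = g (m + c))] at h3
                omega
          have x5 : ¬ (f (c + e) = m + c) := by
            intro hveq
            have hrq : c + e < g 0 := by
              rcases eq_or_lt_of_le hr_ge with heq | h
              · rw [heq] at hveq
                omega
              · exact h
            rcases Nat.lt_or_ge (m - 1 - e) c with hcase | hcase
            · -- Case B : q = c + e ≥ m
              have hqm : m ≤ c + e := by omega
              have hrr : f (g (g 0)) = g 0 := hfg _ hr_n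
              have hgr_lt : g (g 0) < g 0 := by
                obtain ⟨w, hw1, hw2⟩ := HD (g 0) hr_n
                have hwn2 : w < n := by omega
                have hle : g (g 0) ≤ g 0 := by
                  rcases eq_or_lt_of_le hw2 with heq | h
                  · rw [heq, hgf w hwn2]; omega
                  · exact HA (g 0) w (g (g 0)) (g 0) le_rfl hw1 (hg _ hr_n)
                      (by omega) (by omega)
                have hne : g (g 0) ≠ g 0 := by
                  intro h
                  rw [h] at hrr
                  omega
                omega
              have hq_lt : c + e - m < g (g 0) := by
                by_contra hcon
                push_neg at hcon
                have := hAsc (g (g 0)) (by omega)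
                omega
              refine Hsq (c + e - m) (g (g 0)) (g 0) hq_lt hgr_lt hr_n ?_ ?_
              · rw [hrr, hr_f]
                omega
              · rw [hr_f]
                have h1 := hAsc (c + e - m) (by omega)
                rw [h1, (by omega : m + (c + e - m) = c + e), hveq]
                omega
            · -- Case A : q = c + e ≤ m - 1
              have hgq_f : f (g (c + e)) = c + e := hfg _ (by omega)
              have hgc_f : f (g c) = c := hfg _ (by omega)
              have hgq_n : g (c + e) < n := hg _ (by omega)
              have hgc_n : g c < n := hg _ (by omega)
              have ord1 : g (c + e) < g c := by
                have hne : g (c + e) ≠ g c := by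
                  intro h
                  rw [h, hgc_f] at hgq_f
                  omega
                by_contra hcon
                push_neg at hcon
                have hgq0 : g (c + e) ≠ 0 := by
                  intro h
                  rw [h] at hgq_f
                  omega
                exact HB (g c) 0 (g (c + e)) (by omega) (by omega) hgq_n
                  (by omega) (by omega)
              have ord2 : g c < g 0 := by
                have hne : g c ≠ g 0 := by
                  intro h
                  rw [h, hr_f] at hgc_f
                  omega
                by_contra hcon
                push_neg at hcon
                have hgc0 : g c ≠ 0 := by
                  intro h
                  rw [h] at hgc_f
                  omega
                exact HB (g 0) 0 (g c) (by omega) (by omega) hgc_n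
                  (by omega) (by omega)
              refine Hsq (g (c + e)) (g c) (g 0) ord1 ord2 hr_n ?_ ?_
              · rw [hgc_f, hfc, hr_f]
                omega
              · rw [hr_f, hgq_f, hveq]
                omega
          omega
    have hr_eq1 : f (c + (m - 1)) = 0 := by
      have := hDesc (m - 1) (by omega)
      omega
    have hr_lt : c + (m - 1) < n := by
      by_contra hcon
      push_neg at hcon
      rw [hfid _ hcon] at hr_eq1
      omega
    have hr_eq : g 0 = c + (m - 1) := by
      rw [← hr_eq1, hgf _ hr_lt]
    have hTail : ∀ x, c + (m - 1) < x → x < n → f x = x := by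
      intro x
      induction x using Nat.strong_induction_on with
      | _ x ih =>
        intro hx1 hx2
        have gsmall : ∀ v, v < x → g v < x := by
          intro v hv
          rcases Nat.lt_or_ge v m with h1 | h1
          · have h2 := hDesc (m - 1 - v) (by omega)
            have hpos : c + (m - 1 - v) < n := by omega
            have hv2 : v = f (c + (m - 1 - v)) := by omega
            have h4 := hgf (c + (m - 1 - v)) hpos
            rw [← hv2] at h4
            omega
          · rcases Nat.lt_or_ge v (m + c) with h2 | h2
            · have h3 := hAsc (v - m) (by omega)
              have hv2 : v = f (v - m) := by omega
              have h4 := hgf (v - m) (by omega)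
              rw [← hv2] at h4
              omega
            · have hveq := ih v hv (by omega) (by omega)
              have : g v = v := by
                have hv2 : v = f v := hveq.symm
                calc g v = g (f v) := by rw [← hv2]
                _ = v := hgf v (by omega)
              omega
        have hge : x ≤ f x := by
          by_contra hcon
          push_neg at hcon
          have h1 := gsmall (f x) hcon
          rw [hgf x hx2] at h1
          omega
        rcases eq_or_lt_of_le hge with heq | hlt
        · omega
        · exfalso
          have hwx : f (g x) = x := hfg x hx2
          have hwlt : g x ≤ x :=
            HA (g (x - 1)) x (g x) x (le_of_lt (gsmall (x - 1) (by omega))) le_rfl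
              (hg x hx2) (by rw [hfg (x - 1) (by omega)]; omega) (by omega)
          rcases eq_or_lt_of_le hwlt with heq | h2
          · rw [heq] at hwx; omega
          · rcases Nat.lt_or_ge (g x) c with p1 | p1
            · have := hAsc _ p1
              omega
            · rcases Nat.lt_or_ge (g x) (c + m) with p2 | p2
              · have h3 := hDesc (g x - c) (by omega)
                rw [(by omega : c + (g x - c) = g x)] at h3
                omega
              · have := ih (g x) h2 (by omega) (by omega)
                omega
    have hcm : c ≤ m := by
      by_contra hcon
      push_neg at hcon
      refine Hsq 0 (c - 1) (c + (m - 1)) (by omega) (by omega) (by omega) ?_ ?_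
      · -- f (f (c-1)) = 0 < f (f (c + (m-1))) = m
        have e1 : f (f (c - 1)) = 0 := by
          rw [hAsc (c - 1) (by omega), (by omega : m + (c - 1) = c + (m - 1))]
          exact hr_eq1
        have e2 : f (f (c + (m - 1))) = m := by
          rw [hr_eq1]
          omega
        omega
      · have e2 : f (f (c + (m - 1))) = m := by
          rw [hr_eq1]
          omega
        have e3 : f (f 0) = m + m := by
          rw [hm0, hAsc m (by omega)]
        omega
    refine ⟨m, c, hc1, hcm, by omega, ?_⟩
    apply Equiv.ext
    intro i
    apply Fin.ext
    have hiv : ((π i : Fin n) : ℕ) = f (i : ℕ) := by rw [hfv _ i.isLt, Fin.eta]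
    rw [hiv, Pms_val m c (by omega) i]
    unfold fval
    split_ifs with h1 h2
    · exact hAsc _ h1
    · have h3 := hDesc ((i : ℕ) - c) (by omega)
      rw [(by omega : c + ((i : ℕ) - c) = (i : ℕ))] at h3
      omega
    · exact hTail _ (by omega) i.isLt

lemma good_iff {n : ℕ} (hn : 1 ≤ n) (π : Equiv.Perm (Fin n)) :
    (Avoids312 π ∧ Avoids132 π ∧ Avoids312 (π * π)) ↔ π ∈ Gset n := by
  constructor
  · intro ⟨h1, h2, h3⟩
    rcases converse π h1 h2 h3 with rfl | ⟨m, s, hs, hsm, hms, rfl⟩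
    · exact mem_insert_self _ _
    · apply mem_insert_of_mem
      rw [mem_image]
      refine ⟨(m + s - 1, s - 1), mem_Tset.2 ⟨by omega, by omega⟩, ?_⟩
      have e1 : m + s - 1 - (s - 1) = m := by omega
      have e2 : s - 1 + 1 = s := by omega
      rw [e1, e2]
  · intro hmem
    rcases mem_insert.1 hmem with rfl | hmem'
    · exact one_good n
    · rw [mem_image] at hmem'
      obtain ⟨p, hp, rfl⟩ := hmem'
      have h1 := mem_Tset.1 hp
      exact Pms_good (p.1 - p.2) (p.2 + 1) (by omega) (by omega) (by omega)

lemma main_count (n : ℕ) (hn : 1 ≤ n) :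
    Nat.card {π : Equiv.Perm (Fin n) // Avoids312 π ∧ Avoids132 π ∧ Avoids312 (π * π)} =
      1 + ∑ q ∈ range n, (q + 1) / 2 := by
  rw [Nat.card_congr (Equiv.subtypeEquivRight (fun π => good_iff hn π))]
  rw [Nat.card_eq_finsetCard (Gset n)]
  exact Gset_card n hn

theorem stmt11 (n : ℕ) (hn : 1 ≤ n) (k : ℕ) :
    (n = 2 * k →
      Nat.card {π : Equiv.Perm (Fin n) // Avoids312 π ∧ Avoids132 π ∧ Avoids312 (π * π)} =
        k ^ 2 + 1) ∧
    (n = 2 * k + 1 →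
      Nat.card {π : Equiv.Perm (Fin n) // Avoids312 π ∧ Avoids132 π ∧ Avoids312 (π * π)} =
        k ^ 2 + k + 1) := by
  have hk2 : k ^ 2 = k * k := by ring
  constructor
  · rintro rfl
    rw [main_count _ hn, (sum_halves k).1]
    omega
  · rintro rfl
    rw [main_count _ hn, (sum_halves k).2]
    omega
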